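/- arXiv:2002.10874 — 3 statements merged into one kernel-verified Lean document; each statement's English description precedes it below -/
import Mathlib

section
/- Let ν₁,…,νₙ ∈ ℤ² be the outward primitive normal vectors of the edges of a convex lattice polygon, listed in cyclic order, with edge lattice lengths ℓ₁,…,ℓₙ > 0, and fix m with 2 ≤ m ≤ n-2. Suppose the endpoints of ν₁,…,νₘ (viewed as points of ℤ²) are all collinear. Then for any positive lengths ℓ'₁,…,ℓ'ₘ such that the closed balancing condition ℓ'₁μ₁ + ⋯ + ℓ'ₘμₘ + ℓ_{m+1}μ_{m+1} + ⋯ + ℓₙμₙ = 0 holds (where μᵢ is νᵢ rotated by π/2), the sum ℓ'₁ + ⋯ + ℓ'ₘ equals ℓ₁ + ⋯ + ℓₘ. -/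
open Finset

/-- (Collinear case of the single-cycle lemma.) Let
`ν 0, …, ν (n-1) ∈ ℤ²` be the outward primitive normal vectors, in cyclic order,
of the edges of a convex lattice polygon (convexity is expressed by the strict
positivity of consecutive cross products), let `μ i` be `ν i` rotated by `π/2`,
and let `ℓ i > 0` be the edge lattice lengths, so that `∑ i, ℓ i • μ i = 0`.
Fix `m` with `2 ≤ m` and `m + 2 ≤ n`, and suppose the endpoints of
`ν 0, …, ν (m-1)`, viewed as points of the plane, are all collinear. Then for
any positive lengths `ℓ' i` agreeing with `ℓ` outside the first `m` indices and
satisfying the same balancing condition, `∑_{i<m} ℓ' i = ∑_{i<m} ℓ i`. -/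
theorem collinear_normals_sum_invariant (n m : ℕ) [NeZero n]
    (hm : 2 ≤ m) (hmn : m + 2 ≤ n)
    (ν : Fin n → ℤ × ℤ) (μ : Fin n → ℝ × ℝ)
    (hprim : ∀ i, IsCoprime (ν i).1 (ν i).2)
    (hμ : ∀ i, μ i = ((-(ν i).2 : ℝ), ((ν i).1 : ℝ)))
    (hconv : ∀ i : Fin n,
      0 < (ν i).1 * (ν (i + 1)).2 - (ν i).2 * (ν (i + 1)).1)
    (ℓ ℓ' : Fin n → ℝ)
    (hpos : ∀ i, 0 < ℓ i) (hpos' : ∀ i, 0 < ℓ' i)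
    (hcoll : Collinear ℝ
      {x : ℝ × ℝ | ∃ i : Fin n, (i : ℕ) < m ∧ x = (((ν i).1 : ℝ), ((ν i).2 : ℝ))})
    (hagree : ∀ i : Fin n, m ≤ (i : ℕ) → ℓ' i = ℓ i)
    (hbal : ∑ i, ℓ i • μ i = 0)
    (hbal' : ∑ i, ℓ' i • μ i = 0) :
    ∑ i ∈ Finset.univ.filter (fun i : Fin n => (i : ℕ) < m), ℓ' i =
      ∑ i ∈ Finset.univ.filter (fun i : Fin n => (i : ℕ) < m), ℓ i := by
  classical
  set F := Finset.univ.filter (fun i : Fin n => (i : ℕ) < m) with hF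
  set c : Fin n → ℝ := fun i => ℓ' i - ℓ i with hc
  set x : Fin n → ℝ × ℝ := fun i => (((ν i).1 : ℝ), ((ν i).2 : ℝ)) with hx
  have hc0 : ∀ i ∉ F, c i = 0 := by
    intro i hi
    simp only [hF, Finset.mem_filter, Finset.mem_univ, true_and, not_lt] at hi
    simp [hc, hagree i hi]
  have hsum : ∑ i ∈ F, c i • μ i = 0 := by
    rw [Finset.sum_subset (Finset.subset_univ F)]
    · have : ∑ i, c i • μ i = ∑ i, (ℓ' i • μ i - ℓ i • μ i) := by
        simp [hc, sub_smul]
      rw [this, Finset.sum_sub_distrib, hbal, hbal', sub_zero]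
    · intro i _ hi; rw [hc0 i hi, zero_smul]
  have hX : ∑ i ∈ F, c i * ((ν i).1 : ℝ) = 0 := by
    have := congrArg Prod.snd hsum
    simpa [Prod.snd_sum, hμ] using this
  have hY : ∑ i ∈ F, c i * ((ν i).2 : ℝ) = 0 := by
    have := congrArg Prod.fst hsum
    have h2 : ∑ i ∈ F, (-(c i * ((ν i).2 : ℝ))) = 0 := by
      simpa [Prod.fst_sum, hμ, mul_comm] using this
    rw [Finset.sum_neg_distrib] at h2
    linarith
  -- indices 0 and 1
  have hn : 0 < n := by omega
  set i0 : Fin n := ⟨0, by omega⟩ with hi0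
  set i1 : Fin n := ⟨1, by omega⟩ with hi1
  have hi01 : i0 + 1 = i1 := by
    apply Fin.ext
    simp [Fin.add_def, hi0, hi1, Nat.mod_eq_of_lt (show 1 < n by omega)]
  have hmem : ∀ i : Fin n, (i : ℕ) < m → i ∈ F := by
    intro i hi; simp [hF, hi]
  have hi0F : i0 ∈ F := hmem i0 (by simp [hi0]; omega)
  have hi1F : i1 ∈ F := hmem i1 (by simp [hi1]; omega)
  -- cross product a > 0
  have ha : (0 : ℝ) < (x i0).1 * (x i1).2 - (x i0).2 * (x i1).1 := by
    have := hconv i0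
    rw [hi01] at this
    have : (0 : ℝ) < ((ν i0).1 * (ν i1).2 - (ν i0).2 * (ν i1).1 : ℤ) := by
      exact_mod_cast this
    push_cast at this
    simpa [hx] using this
  set a : ℝ := (x i0).1 * (x i1).2 - (x i0).2 * (x i1).1 with hadef
  -- collinearity
  obtain ⟨p, v, hpv⟩ := (collinear_iff_exists_forall_eq_smul_vadd _).mp hcoll
  have hline : ∀ i : Fin n, (i : ℕ) < m → ∃ t : ℝ, x i = t • v +ᵥ p := by
    intro i hi
    exact hpv (x i) ⟨i, hi, rfl⟩
  obtain ⟨t0, ht0⟩ := hline i0 (by simp [hi0]; omega)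
  obtain ⟨t1, ht1⟩ := hline i1 (by simp [hi1]; omega)
  set w : ℝ × ℝ := x i1 - x i0 with hw
  -- D (x i) w = a for all i ∈ F
  have hDa : ∀ i ∈ F, (x i).1 * w.2 - (x i).2 * w.1 = a := by
    intro i hi
    simp only [hF, Finset.mem_filter, Finset.mem_univ, true_and] at hi
    obtain ⟨t, ht⟩ := hline i hi
    have hw' : w = (t1 - t0) • v := by
      rw [hw, ht1, ht0]
      simp [sub_smul]
    have ha' : a = (t1 - t0) * (p.1 * v.2 - p.2 * v.1) := by
      rw [hadef, ht0, ht1]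
      simp only [Prod.smul_fst, Prod.smul_snd, Prod.fst_vadd, Prod.snd_vadd, smul_eq_mul, vadd_eq_add,
        Prod.fst_add, Prod.snd_add]
      ring
    rw [ht, hw', ha']
    simp only [Prod.smul_fst, Prod.smul_snd, Prod.fst_vadd, Prod.snd_vadd, smul_eq_mul, vadd_eq_add,
      Prod.fst_add, Prod.snd_add]
    ring
  -- conclude
  have hkey : (∑ i ∈ F, c i) * a = 0 := by
    have : ∑ i ∈ F, c i * ((x i).1 * w.2 - (x i).2 * w.1) = 0 := by
      have : ∑ i ∈ F, c i * ((x i).1 * w.2 - (x i).2 * w.1)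
          = (∑ i ∈ F, c i * (x i).1) * w.2 - (∑ i ∈ F, c i * (x i).2) * w.1 := by
        rw [Finset.sum_mul, Finset.sum_mul, ← Finset.sum_sub_distrib]
        congr 1; ext i; ring
      rw [this]
      simp only [hx] at *
      rw [hX, hY]; ring
    rw [Finset.sum_mul]
    rw [← this]
    apply Finset.sum_congr rfl
    intro i hi
    rw [hDa i hi]
  have hane : a ≠ 0 := ne_of_gt ha
  have hsum0 : ∑ i ∈ F, c i = 0 := by
    rcases mul_eq_zero.mp hkey with h | h
    · exact h
    · exact absurd h hane
  have : ∑ i ∈ F, (ℓ' i - ℓ i) = 0 := hsum0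
  rw [Finset.sum_sub_distrib] at this
  linarith
end

section
/- Let Δ be a nonhyperelliptic lattice polygon and let τ be a one-dimensional face of the interior polygon Δ⁽¹⁾, with supporting inequality α x + β y ≤ c (gcd(α,β)=1, all integer). Then the line {(x,y) : α x + β y = c + 1} has nonempty intersection with Δ. -/
open Set Finset

noncomputable section

/-- A lattice point viewed as a point of the real plane. -/
def toR (p : ℤ × ℤ) : ℝ × ℝ := ((p.1 : ℝ), (p.2 : ℝ))

/-- The real convex hull of a finite set of lattice points. -/
def polyHull (V : Finset (ℤ × ℤ)) : Set (ℝ × ℝ) :=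
  convexHull ℝ (toR '' (V : Set (ℤ × ℤ)))

/-- `V` spans a two-dimensional (lattice) polygon. -/
def IsLatticePolygon (V : Finset (ℤ × ℤ)) : Prop :=
  ∃ p q r : ℤ × ℤ, p ∈ V ∧ q ∈ V ∧ r ∈ V ∧
    AffineIndependent ℝ ![toR p, toR q, toR r]

/-- Interior lattice points of the polygon spanned by `V`. -/
def intPts (V : Finset (ℤ × ℤ)) : Set (ℤ × ℤ) :=
  {p | toR p ∈ interior (polyHull V)}

/-- Boundary lattice points of the polygon spanned by `V`. -/
def bdPts (V : Finset (ℤ × ℤ)) : Set (ℤ × ℤ) :=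
  {p | toR p ∈ frontier (polyHull V)}

/-- All lattice points of the polygon spanned by `V`. -/
def latPts (V : Finset (ℤ × ℤ)) : Set (ℤ × ℤ) :=
  {p | toR p ∈ polyHull V}

/-- The interior polygon: convex hull of the interior lattice points. -/
def intPoly (V : Finset (ℤ × ℤ)) : Set (ℝ × ℝ) :=
  convexHull ℝ (toR '' intPts V)

/-- `Δ` is nonhyperelliptic: its interior polygon is two-dimensional. -/
def Nonhyperelliptic (V : Finset (ℤ × ℤ)) : Prop :=
  ∃ p q r : ℤ × ℤ, p ∈ intPts V ∧ q ∈ intPts V ∧ r ∈ intPts V ∧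
    AffineIndependent ℝ ![toR p, toR q, toR r]

/-- The integer line `a x + b y = d` (with `gcd(a,b) = 1`) supports a
one-dimensional face of the convex set `S`. -/
def IsFaceLine (S : Set (ℝ × ℝ)) (a b d : ℤ) : Prop :=
  IsCoprime a b ∧ (∀ x ∈ S, (a : ℝ) * x.1 + (b : ℝ) * x.2 ≤ (d : ℝ)) ∧
  ∃ p q : ℝ × ℝ, p ∈ S ∧ q ∈ S ∧ p ≠ q ∧
    (a : ℝ) * p.1 + (b : ℝ) * p.2 = (d : ℝ) ∧
    (a : ℝ) * q.1 + (b : ℝ) * q.2 = (d : ℝ)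

/-- Let `Δ` be a nonhyperelliptic lattice polygon and `τ` a
one-dimensional face of the interior polygon `Δ⁽¹⁾`, with primitive supporting
inequality `α x + β y ≤ c`. Then the relaxed line `α x + β y = c + 1` meets
`Δ`. -/
theorem relaxedLine_meets_polygon (V : Finset (ℤ × ℤ)) (hV : IsLatticePolygon V)
    (hnh : Nonhyperelliptic V) (α β c : ℤ)
    (hτ : IsFaceLine (intPoly V) α β c) :
    ∃ x ∈ polyHull V, (α : ℝ) * x.1 + (β : ℝ) * x.2 = (c : ℝ) + 1 := by
  obtain ⟨hcop, hle, p, q, hp, hq, -, hfp, -⟩ := hτ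
  set f : ℝ × ℝ → ℝ := fun x => (α : ℝ) * x.1 + (β : ℝ) * x.2 with hf
  have hlin : IsLinearMap ℝ f :=
    ⟨fun x y => by simp [hf]; ring, fun m x => by simp [hf]; ring⟩
  have hcont : Continuous f := by
    simp only [hf]; fun_prop
  -- not both α, β are zero
  have hne : (α : ℝ) ^ 2 + (β : ℝ) ^ 2 > 0 := by
    rcases eq_or_ne α 0 with h1 | h1
    · rcases eq_or_ne β 0 with h2 | h2
      · exfalso; rw [h1, h2] at hcop; exact (not_isCoprime_zero_zero hcop)
      · have : (β : ℝ) ≠ 0 := Int.cast_ne_zero.mpr h2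
        positivity
    · have : (α : ℝ) ≠ 0 := Int.cast_ne_zero.mpr h1
      positivity
  -- Step 1: some interior lattice point attains value c
  have hstep1 : ∃ u ∈ intPts V, f (toR u) = (c : ℝ) := by
    by_contra h
    push_neg at h
    have hall : ∀ u ∈ intPts V, f (toR u) ≤ (c : ℝ) - 1 := by
      intro u hu
      have h1 : f (toR u) ≤ (c : ℝ) := hle (toR u) (subset_convexHull ℝ _ ⟨u, hu, rfl⟩)
      have h2 : f (toR u) ≠ (c : ℝ) := h u hu
      have hcast : f (toR u) = ((α * u.1 + β * u.2 : ℤ) : ℝ) := by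
        simp [hf, toR]
      rw [hcast] at h1 h2 ⊢
      have h1' : α * u.1 + β * u.2 ≤ c := by exact_mod_cast h1
      have h2' : α * u.1 + β * u.2 ≠ c := fun hh => h2 (by exact_mod_cast hh)
      have : α * u.1 + β * u.2 ≤ c - 1 := by omega
      calc ((α * u.1 + β * u.2 : ℤ) : ℝ) ≤ ((c - 1 : ℤ) : ℝ) := by exact_mod_cast this
        _ = (c : ℝ) - 1 := by push_cast; ring
    have hsub : intPoly V ⊆ {x | f x ≤ (c : ℝ) - 1} :=
      convexHull_min (by rintro _ ⟨u, hu, rfl⟩; exact hall u hu) (convex_halfSpace_le hlin _)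
    have h3 : f p ≤ (c : ℝ) - 1 := hsub hp
    have hfp' : f p = (c : ℝ) := hfp
    linarith
  obtain ⟨u, hu, hfu⟩ := hstep1
  -- u is in the interior of polyHull, so we can push in direction (α, β)
  have hui : toR u ∈ interior (polyHull V) := hu
  obtain ⟨ε, hε, hball⟩ := Metric.mem_nhds_iff.mp (mem_interior_iff_mem_nhds.mp hui)
  set N : ℝ := |(α : ℝ)| + |(β : ℝ)| + 1 with hN
  have hNpos : 0 < N := by positivity
  set t : ℝ := ε / (2 * N) with ht
  have htpos : 0 < t := by positivity
  set w : ℝ × ℝ := ((toR u).1 + t * α, (toR u).2 + t * β) with hw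
  have hwball : w ∈ Metric.ball (toR u) ε := by
    rw [Metric.mem_ball, Prod.dist_eq]
    have h1 : dist w.1 (toR u).1 = t * |(α : ℝ)| := by
      rw [Real.dist_eq]; rw [hw]; simp [abs_mul, abs_of_pos htpos]
    have h2 : dist w.2 (toR u).2 = t * |(β : ℝ)| := by
      rw [Real.dist_eq]; rw [hw]; simp [abs_mul, abs_of_pos htpos]
    rw [h1, h2]
    have ha : |(α : ℝ)| < N := by rw [hN]; have := abs_nonneg (β : ℝ); linarith
    have hb : |(β : ℝ)| < N := by rw [hN]; have := abs_nonneg (α : ℝ); linarith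
    have : t * N = ε / 2 := by rw [ht]; field_simp
    have h3 : t * |(α : ℝ)| < ε := by nlinarith
    have h4 : t * |(β : ℝ)| < ε := by nlinarith
    exact max_lt h3 h4
  have hwmem : w ∈ polyHull V := hball hwball
  have hfw : f w = (c : ℝ) + t * ((α : ℝ) ^ 2 + (β : ℝ) ^ 2) := by
    rw [hw, hf]
    simp only
    rw [← hfu]
    simp [hf]; ring
  have hfwgt : f w > (c : ℝ) := by
    rw [hfw]; nlinarith
  -- Step 2: some vertex has value ≥ c + 1
  have hstep2 : ∃ v ∈ (V : Set (ℤ × ℤ)), (c : ℝ) + 1 ≤ f (toR v) := by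
    by_contra h
    push_neg at h
    have hall : ∀ v ∈ (V : Set (ℤ × ℤ)), f (toR v) ≤ (c : ℝ) := by
      intro v hv
      have h1 := h v hv
      have hcast : f (toR v) = ((α * v.1 + β * v.2 : ℤ) : ℝ) := by simp [hf, toR]
      rw [hcast] at h1 ⊢
      have : ((α * v.1 + β * v.2 : ℤ) : ℝ) < ((c + 1 : ℤ) : ℝ) := by push_cast; push_cast at h1; linarith
      have h1' : α * v.1 + β * v.2 < c + 1 := by exact_mod_cast this
      have : α * v.1 + β * v.2 ≤ c := by omega
      exact_mod_cast this
    have hsub : polyHull V ⊆ {x | f x ≤ (c : ℝ)} :=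
      convexHull_min (by rintro _ ⟨v, hv, rfl⟩; exact hall v hv) (convex_halfSpace_le hlin _)
    have := hsub hwmem
    simp only [mem_setOf_eq] at this
    linarith
  obtain ⟨v, hv, hfv⟩ := hstep2
  -- Intermediate value theorem on the connected set polyHull
  have hconn : IsPreconnected (polyHull V) := (convex_convexHull ℝ _).isPreconnected
  have humem : toR u ∈ polyHull V := interior_subset hui
  have hvmem : toR v ∈ polyHull V := subset_convexHull ℝ _ ⟨v, hv, rfl⟩
  have hivt := hconn.intermediate_value humem hvmem (hcont.continuousOn)
  have hmem : (c : ℝ) + 1 ∈ Icc (f (toR u)) (f (toR v)) := by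
    rw [hfu]; exact ⟨by linarith, hfv⟩
  obtain ⟨x, hx, hfx⟩ := hivt hmem
  exact ⟨x, hx, hfx⟩
end
end

section
/- Up to lattice equivalence (unimodular affine transformations of ℤ²), the maximal hyperelliptic lattice polygons of genus g ≥ 2 are exactly the g+2 polygons E_k = conv((0,0), (0,2), (g+k,0), (g+2-k,2)) for 1 ≤ k ≤ g+2. In particular, each E_k has exactly g interior lattice points, all lying on the line y = 1. -/
open Set Finset

noncomputable section

/-- A lattice polygon is hyperelliptic if it has at least two interior lattice
points and they are all collinear. -/
def Hyperelliptic (V : Finset (ℤ × ℤ)) : Prop :=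
  2 ≤ (intPts V).ncard ∧ Collinear ℝ (toR '' intPts V)

/-- A lattice polygon is maximal if it is not properly contained in another
lattice polygon with the same interior lattice points. -/
def MaximalPoly (V : Finset (ℤ × ℤ)) : Prop :=
  IsLatticePolygon V ∧ ¬ ∃ W : Finset (ℤ × ℤ), IsLatticePolygon W ∧
    polyHull V ⊂ polyHull W ∧ intPts W = intPts V

/-- A unimodular affine map `x ↦ Ax + b` of `ℤ²`. -/
def unimodMap (a b c d e f : ℤ) (p : ℤ × ℤ) : ℤ × ℤ :=
  (a * p.1 + b * p.2 + e, c * p.1 + d * p.2 + f)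

/-- Lattice equivalence of lattice polygons: a unimodular affine transformation
carries the lattice points of one onto the lattice points of the other. -/
def LatEquiv (V W : Finset (ℤ × ℤ)) : Prop :=
  ∃ a b c d e f : ℤ, (a * d - b * c = 1 ∨ a * d - b * c = -1) ∧
    unimodMap a b c d e f '' latPts V = latPts W

/-- The maximal hyperelliptic polygon
`E_k = conv((0,0), (0,2), (g+k,0), (g+2-k,2))`. -/
def EkVerts (g k : ℤ) : Finset (ℤ × ℤ) :=
  {(0, 0), (0, 2), (g + k, 0), (g + 2 - k, 2)}

/-!
A unimodular map sends the collinear interior lattice points of a hyperelliptic polygon of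
genus `g` to a lattice line `y = 1`, where they are consecutive because the interior is convex;
so we may assume they are `(1,1), …, (g,1)`. A lattice point of the polygon at height `≥ 3`
(or `≤ -1`) would produce, through the cone over `[1,2] × {1}`, an interior lattice point at
height `2` (or `0`), so the polygon lies in the strip `0 ≤ y ≤ 2`, and its slice at height `1`
lies in `[0, g + 1]`. The midpoint of a point at height `0` and one at height `2` lies on that
slice, so the bottom side `[P, Q]` bounds the top side by `[-P, 2g + 2 - Q]`: the polygon lies in
the trapezoid `conv((P,0), (Q,0), (-P,2), (2g+2-Q,2))`, which has the same interior lattice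
points, and by maximality it is that trapezoid. A shear, after possibly a flip, turns it into an
`E_k`; the same containment argument shows that each `E_k` is maximal. Finally `E_k` determines
`k`, since `g + k + 1` is the largest number of collinear lattice points in `E_k`.
-/

lemma toR_mem_polyHull {V : Finset (ℤ × ℤ)} {v : ℤ × ℤ} (hv : v ∈ V) : toR v ∈ polyHull V :=
  subset_convexHull ℝ _ (Set.mem_image_of_mem toR hv)

lemma polyHull_subset {V : Finset (ℤ × ℤ)} {S : Set (ℝ × ℝ)} (hS : Convex ℝ S)
    (h : ∀ v ∈ V, toR v ∈ S) : polyHull V ⊆ S :=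
  convexHull_min (by rintro _ ⟨v, hv, rfl⟩; exact h v hv) hS

lemma convexHull_toR_latPts (V : Finset (ℤ × ℤ)) :
    convexHull ℝ (toR '' latPts V) = polyHull V :=
  (convexHull_min (by rintro _ ⟨p, hp, rfl⟩; exact hp) (convex_convexHull ℝ _)).antisymm
    (convexHull_mono (Set.image_mono fun _ => toR_mem_polyHull))

lemma affineSpan_ne_top_of_collinear {s : Set (ℝ × ℝ)} (hs : Collinear ℝ s) :
    affineSpan ℝ s ≠ ⊤ := by
  intro htop
  have := collinear_iff_finrank_le_one.1 hs
  rw [← direction_affineSpan, htop, AffineSubspace.direction_top, finrank_top] at this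
  simp at this

lemma isLatticePolygon_iff_nonempty_interior (V : Finset (ℤ × ℤ)) :
    IsLatticePolygon V ↔ (interior (polyHull V)).Nonempty := by
  constructor
  · rintro ⟨p, q, r, hp, hq, hr, hind⟩
    have hspan : affineSpan ℝ (Set.range ![toR p, toR q, toR r]) = ⊤ := by
      rw [hind.affineSpan_eq_top_iff_card_eq_finrank_add_one]
      simp
    refine (interior_convexHull_nonempty_iff_affineSpan_eq_top.2 hspan).mono
      (interior_mono (convexHull_mono ?_))
    rintro _ ⟨i, rfl⟩
    fin_cases i
    exacts [⟨p, hp, rfl⟩, ⟨q, hq, rfl⟩, ⟨r, hr, rfl⟩]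
  · intro h
    have htop := interior_convexHull_nonempty_iff_affineSpan_eq_top.1 h
    by_contra hV
    simp only [IsLatticePolygon, not_exists, not_and, affineIndependent_iff_not_collinear_set,
      not_not] at hV
    obtain ⟨_, ⟨p, hp, rfl⟩⟩ : (toR '' (V : Set (ℤ × ℤ))).Nonempty := by
      by_contra hne
      rw [Set.not_nonempty_iff_eq_empty] at hne
      simp [hne] at htop
    obtain ⟨x, hsub⟩ : ∃ x, toR '' (V : Set (ℤ × ℤ)) ⊆ line[ℝ, toR p, x] := by
      by_cases hq : ∃ q ∈ V, toR q ≠ toR p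
      · obtain ⟨q, hq, hqp⟩ := hq
        refine ⟨toR q, ?_⟩
        rintro _ ⟨r, hr, rfl⟩
        exact (hV p q r hp hq hr).mem_affineSpan_of_mem_of_ne (by simp) (by simp) (by simp)
          hqp.symm
      · simp only [not_exists, not_and, not_not] at hq
        refine ⟨toR p, ?_⟩
        rintro _ ⟨r, hr, rfl⟩
        rw [hq r hr]
        exact mem_affineSpan ℝ (by simp)
    exact affineSpan_ne_top_of_collinear (collinear_pair ℝ (toR p) x)
      (top_unique (htop ▸ affineSpan_le.2 hsub))

structure UnimodularMap where
  a : ℤ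
  b : ℤ
  c : ℤ
  d : ℤ
  e : ℤ
  f : ℤ
  isUnit_det : IsUnit (a * d - b * c)

namespace UnimodularMap

variable (σ τ : UnimodularMap)

instance : CoeFun UnimodularMap fun _ => ℤ × ℤ → ℤ × ℤ :=
  ⟨fun σ => unimodMap σ.a σ.b σ.c σ.d σ.e σ.f⟩

lemma apply_def (p : ℤ × ℤ) : σ p = (σ.a * p.1 + σ.b * p.2 + σ.e, σ.c * p.1 + σ.d * p.2 + σ.f) :=
  rfl

def real : (ℝ × ℝ) →ᵃ[ℝ] (ℝ × ℝ) where
  toFun z := (σ.a * z.1 + σ.b * z.2 + σ.e, σ.c * z.1 + σ.d * z.2 + σ.f)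
  linear :=
    { toFun := fun z => (σ.a * z.1 + σ.b * z.2, σ.c * z.1 + σ.d * z.2)
      map_add' := fun z w => by simp only [Prod.fst_add, Prod.snd_add, Prod.mk_add_mk]; ring_nf
      map_smul' := fun t z => by
        simp only [Prod.smul_fst, Prod.smul_snd, smul_eq_mul, RingHom.id_apply, Prod.smul_mk]
        ring_nf }
  map_vadd' z w := by
    simp only [vadd_eq_add, LinearMap.coe_mk, AddHom.coe_mk, Prod.fst_add, Prod.snd_add,
      Prod.mk_add_mk]
    ring_nf

lemma real_apply (z : ℝ × ℝ) :
    σ.real z = (σ.a * z.1 + σ.b * z.2 + σ.e, σ.c * z.1 + σ.d * z.2 + σ.f) :=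
  rfl

lemma real_toR (p : ℤ × ℤ) : σ.real (toR p) = toR (σ p) := by
  simp [real_apply, toR, apply_def]

lemma image_toR_image (T : Set (ℤ × ℤ)) : toR '' (σ '' T) = σ.real '' (toR '' T) := by
  simp only [Set.image_image, real_toR]

lemma det_mul_self :
    (σ.a * σ.d - σ.b * σ.c) * (σ.a * σ.d - σ.b * σ.c) = 1 :=
  Int.isUnit_mul_self σ.isUnit_det

/-- The inverse map: the adjugate matrix scaled by the determinant `δ = ±1`, since `δ⁻¹ = δ`. -/
def symm : UnimodularMap where
  a := (σ.a * σ.d - σ.b * σ.c) * σ.d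
  b := -((σ.a * σ.d - σ.b * σ.c) * σ.b)
  c := -((σ.a * σ.d - σ.b * σ.c) * σ.c)
  d := (σ.a * σ.d - σ.b * σ.c) * σ.a
  e := (σ.a * σ.d - σ.b * σ.c) * (σ.b * σ.f - σ.d * σ.e)
  f := (σ.a * σ.d - σ.b * σ.c) * (σ.c * σ.e - σ.a * σ.f)
  isUnit_det := by
    convert σ.isUnit_det using 1
    linear_combination (σ.a * σ.d - σ.b * σ.c) * σ.det_mul_self

lemma symm_apply_apply (p : ℤ × ℤ) : σ.symm (σ p) = p := by
  simp only [symm, unimodMap, Prod.ext_iff]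
  constructor
  · linear_combination p.1 * σ.det_mul_self
  · linear_combination p.2 * σ.det_mul_self

lemma apply_symm_apply (p : ℤ × ℤ) : σ (σ.symm p) = p := by
  simp only [symm, unimodMap, Prod.ext_iff]
  constructor
  · linear_combination (p.1 - σ.e) * σ.det_mul_self
  · linear_combination (p.2 - σ.f) * σ.det_mul_self

lemma det_mul_self_real :
    ((σ.a : ℝ) * σ.d - σ.b * σ.c) * ((σ.a : ℝ) * σ.d - σ.b * σ.c) = 1 := by
  exact_mod_cast σ.det_mul_self

lemma real_symm_real (z : ℝ × ℝ) : σ.symm.real (σ.real z) = z := by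
  simp only [real_apply, symm, Prod.ext_iff]
  push_cast
  constructor
  · linear_combination z.1 * σ.det_mul_self_real
  · linear_combination z.2 * σ.det_mul_self_real

lemma real_real_symm (z : ℝ × ℝ) : σ.real (σ.symm.real z) = z := by
  simp only [real_apply, symm, Prod.ext_iff]
  push_cast
  constructor
  · linear_combination (z.1 - σ.e) * σ.det_mul_self_real
  · linear_combination (z.2 - σ.f) * σ.det_mul_self_real

lemma injective : Function.Injective σ :=
  Function.LeftInverse.injective σ.symm_apply_apply

lemma real_injective : Function.Injective σ.real :=
  Function.LeftInverse.injective σ.real_symm_real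

lemma image_eq_preimage_symm (T : Set (ℤ × ℤ)) : σ '' T = σ.symm ⁻¹' T :=
  congrFun (Set.image_eq_preimage_of_inverse σ.symm_apply_apply σ.apply_symm_apply) T

lemma toR_mem_real_image_iff (S : Set (ℝ × ℝ)) (p : ℤ × ℤ) :
    toR p ∈ σ.real '' S ↔ toR (σ.symm p) ∈ S := by
  rw [Set.image_eq_preimage_of_inverse σ.real_symm_real σ.real_real_symm, Set.mem_preimage,
    real_toR]

def toHomeomorph : (ℝ × ℝ) ≃ₜ (ℝ × ℝ) where
  toFun := σ.real
  invFun := σ.symm.real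
  left_inv := σ.real_symm_real
  right_inv := σ.real_real_symm
  continuous_toFun := σ.real.continuous_of_finiteDimensional
  continuous_invFun := σ.symm.real.continuous_of_finiteDimensional

lemma real_image_interior (S : Set (ℝ × ℝ)) :
    σ.real '' interior S = interior (σ.real '' S) :=
  σ.toHomeomorph.image_interior S

/-- `σ.trans τ` is `σ` followed by `τ`. -/
def trans : UnimodularMap where
  a := τ.a * σ.a + τ.b * σ.c
  b := τ.a * σ.b + τ.b * σ.d
  c := τ.c * σ.a + τ.d * σ.c
  d := τ.c * σ.b + τ.d * σ.d
  e := τ.a * σ.e + τ.b * σ.f + τ.e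
  f := τ.c * σ.e + τ.d * σ.f + τ.f
  isUnit_det := by
    convert τ.isUnit_det.mul σ.isUnit_det using 1
    ring

lemma real_trans (z : ℝ × ℝ) : (σ.trans τ).real z = τ.real (σ.real z) := by
  simp only [real_apply, trans, Prod.ext_iff]
  push_cast
  constructor <;> ring

def refl : UnimodularMap := ⟨1, 0, 0, 1, 0, 0, by simp⟩

lemma real_refl (z : ℝ × ℝ) : refl.real z = z := by
  simp [real_apply, refl]

lemma polyHull_image (V : Finset (ℤ × ℤ)) :
    polyHull (V.image σ) = σ.real '' polyHull V := by
  rw [polyHull, polyHull, Finset.coe_image, image_toR_image, AffineMap.image_convexHull]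

variable {σ} {V W : Finset (ℤ × ℤ)}

lemma intPts_eq_image (h : σ.real '' polyHull V = polyHull W) : intPts W = σ '' intPts V := by
  ext p
  rw [image_eq_preimage_symm, Set.mem_preimage]
  simp only [intPts, Set.mem_ofPred_eq]
  rw [← h, ← real_image_interior, toR_mem_real_image_iff]

lemma latPts_eq_image (h : σ.real '' polyHull V = polyHull W) : latPts W = σ '' latPts V := by
  ext p
  rw [image_eq_preimage_symm, Set.mem_preimage]
  simp only [latPts, Set.mem_ofPred_eq]
  rw [← h, toR_mem_real_image_iff]

lemma symm_real_image (h : σ.real '' polyHull V = polyHull W) :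
    σ.symm.real '' polyHull W = polyHull V := by
  rw [← h, Set.image_image]
  simp [real_symm_real]

lemma isLatticePolygon (h : σ.real '' polyHull V = polyHull W) (hV : IsLatticePolygon V) :
    IsLatticePolygon W := by
  rw [isLatticePolygon_iff_nonempty_interior] at hV ⊢
  rw [← h, ← real_image_interior]
  exact hV.image _

lemma maximalPoly (h : σ.real '' polyHull V = polyHull W) (hV : MaximalPoly V) :
    MaximalPoly W := by
  refine ⟨isLatticePolygon h hV.1, ?_⟩
  rintro ⟨W', hW', hlt, hint⟩
  have h' : σ.symm.real '' polyHull W' = polyHull (W'.image σ.symm) :=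
    (σ.symm.polyHull_image W').symm
  refine hV.2 ⟨W'.image σ.symm, isLatticePolygon h' hW', ?_, ?_⟩
  · rw [← h', ← symm_real_image h]
    exact σ.symm.real_injective.image_strictMono hlt
  · rw [intPts_eq_image h', hint, intPts_eq_image h, Set.image_image]
    simp [symm_apply_apply]

end UnimodularMap

section LatticeEquivalence

open UnimodularMap

variable {U V W : Finset (ℤ × ℤ)}

lemma latEquiv_iff : LatEquiv V W ↔ ∃ σ : UnimodularMap, σ.real '' polyHull V = polyHull W := by
  constructor
  · rintro ⟨a, b, c, d, e, f, hdet, him⟩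
    let σ : UnimodularMap := ⟨a, b, c, d, e, f, Int.isUnit_iff.2 hdet⟩
    refine ⟨σ, ?_⟩
    rw [← convexHull_toR_latPts, AffineMap.image_convexHull, ← image_toR_image,
      ← convexHull_toR_latPts]
    exact congrArg (fun T => convexHull ℝ (toR '' T)) him
  · rintro ⟨σ, h⟩
    exact ⟨σ.a, σ.b, σ.c, σ.d, σ.e, σ.f, Int.isUnit_iff.1 σ.isUnit_det, (latPts_eq_image h).symm⟩

lemma LatEquiv.symm (h : LatEquiv V W) : LatEquiv W V := by
  obtain ⟨σ, hσ⟩ := latEquiv_iff.1 h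
  exact latEquiv_iff.2 ⟨σ.symm, symm_real_image hσ⟩

lemma LatEquiv.trans (h₁ : LatEquiv U V) (h₂ : LatEquiv V W) : LatEquiv U W := by
  obtain ⟨σ, hσ⟩ := latEquiv_iff.1 h₁
  obtain ⟨τ, hτ⟩ := latEquiv_iff.1 h₂
  refine latEquiv_iff.2 ⟨σ.trans τ, ?_⟩
  rw [← hτ, ← hσ, Set.image_image]
  simp [real_trans]

lemma latEquiv_of_polyHull_eq (h : polyHull V = polyHull W) : LatEquiv V W :=
  latEquiv_iff.2 ⟨refl, by simp [real_refl, h]⟩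

lemma latEquiv_image (σ : UnimodularMap) (V : Finset (ℤ × ℤ)) : LatEquiv V (V.image σ) :=
  latEquiv_iff.2 ⟨σ, (σ.polyHull_image V).symm⟩

end LatticeEquivalence

def halfPlane (α β γ : ℝ) : Set (ℝ × ℝ) := {z | α * z.1 + β * z.2 ≤ γ}

lemma convex_halfPlane (α β γ : ℝ) : Convex ℝ (halfPlane α β γ) :=
  convex_halfSpace_le ⟨fun z w => by simp only [Prod.fst_add, Prod.snd_add]; ring,
    fun t z => by simp only [Prod.smul_fst, Prod.smul_snd, smul_eq_mul]; ring⟩ γ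

lemma exists_pos_add_smul_mem {E : Type*} [AddCommGroup E] [Module ℝ E] [TopologicalSpace E]
    [ContinuousAdd E] [ContinuousSMul ℝ E] {S : Set E} {z : E} (hz : z ∈ interior S) (v : E) :
    ∃ ε : ℝ, 0 < ε ∧ z + ε • v ∈ S := by
  have hlim : Filter.Tendsto (fun t : ℝ => z + t • v) (nhdsWithin 0 (Set.Ioi 0)) (nhds z) := by
    have := (Continuous.tendsto (f := fun t : ℝ => z + t • v) (by fun_prop) 0).mono_left
      (nhdsWithin_le_nhds (s := Set.Ioi 0))
    simpa using this
  obtain ⟨ε, hmem, hε⟩ :=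
    ((hlim.eventually (mem_interior_iff_mem_nhds.1 hz)).and self_mem_nhdsWithin).exists
  exact ⟨ε, hε, hmem⟩

lemma interior_halfPlane {α β : ℝ} (h : (α, β) ≠ 0) (γ : ℝ) :
    interior (halfPlane α β γ) = {z | α * z.1 + β * z.2 < γ} := by
  have hcont : Continuous fun z : ℝ × ℝ => α * z.1 + β * z.2 := by fun_prop
  refine subset_antisymm (fun z hz => ?_) (interior_maximal
    (fun z hz => show α * z.1 + β * z.2 ≤ γ from le_of_lt hz) (isOpen_lt hcont continuous_const))
  have hpos : 0 < α * α + β * β := by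
    by_contra hle
    exact h (by ext <;> simp <;> nlinarith)
  obtain ⟨ε, hε, hmem⟩ := exists_pos_add_smul_mem hz (α, β)
  have : α * (z.1 + ε * α) + β * (z.2 + ε * β) ≤ γ := by simpa [halfPlane] using hmem
  show α * z.1 + β * z.2 < γ
  nlinarith [mul_pos hε hpos]

/-- The trapezoid with bottom side `[p, q] × {0}` and top side `[r, s] × {2}`. -/
def trapezoid (p q r s : ℝ) : Set (ℝ × ℝ) :=
  {z | 0 ≤ z.2 ∧ z.2 ≤ 2 ∧ p + (r - p) / 2 * z.2 ≤ z.1 ∧ z.1 ≤ q + (s - q) / 2 * z.2}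

lemma trapezoid_eq_inter (p q r s : ℝ) :
    trapezoid p q r s = halfPlane 0 (-1) 0 ∩ halfPlane 0 1 2 ∩
      halfPlane (-1) ((r - p) / 2) (-p) ∩ halfPlane 1 (-((s - q) / 2)) q := by
  ext z
  simp only [trapezoid, halfPlane, Set.mem_inter_iff, Set.mem_ofPred_eq]
  constructor
  · rintro ⟨h₁, h₂, h₃, h₄⟩
    exact ⟨⟨⟨by linarith, by linarith⟩, by linarith⟩, by linarith⟩
  · rintro ⟨⟨⟨h₁, h₂⟩, h₃⟩, h₄⟩
    exact ⟨by linarith, by linarith, by linarith, by linarith⟩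

lemma convex_trapezoid (p q r s : ℝ) : Convex ℝ (trapezoid p q r s) := by
  rw [trapezoid_eq_inter]
  exact (((convex_halfPlane _ _ _).inter (convex_halfPlane _ _ _)).inter
    (convex_halfPlane _ _ _)).inter (convex_halfPlane _ _ _)

lemma interior_trapezoid (p q r s : ℝ) :
    interior (trapezoid p q r s) =
      {z | 0 < z.2 ∧ z.2 < 2 ∧ p + (r - p) / 2 * z.2 < z.1 ∧ z.1 < q + (s - q) / 2 * z.2} := by
  rw [trapezoid_eq_inter, interior_inter, interior_inter, interior_inter,
    interior_halfPlane (by simp), interior_halfPlane (by simp), interior_halfPlane (by simp),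
    interior_halfPlane (by simp)]
  ext z
  simp only [Set.mem_inter_iff, Set.mem_ofPred_eq]
  constructor
  · rintro ⟨⟨⟨h₁, h₂⟩, h₃⟩, h₄⟩
    exact ⟨by linarith, by linarith, by linarith, by linarith⟩
  · rintro ⟨h₁, h₂, h₃, h₄⟩
    exact ⟨⟨⟨by linarith, by linarith⟩, by linarith⟩, by linarith⟩

lemma convexHull_eq_trapezoid {p q r s : ℝ} (hpq : p ≤ q) (hrs : r ≤ s) :
    convexHull ℝ {(p, 0), (q, 0), (r, 2), (s, 2)} = trapezoid p q r s := by
  refine subset_antisymm (convexHull_min ?_ (convex_trapezoid p q r s)) fun z hz => ?_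
  · rintro _ (rfl | rfl | rfl | rfl) <;> refine ⟨?_, ?_, ?_, ?_⟩ <;> norm_num <;> linarith
  obtain ⟨h₁, h₂, h₃, h₄⟩ := hz
  have hC := convex_convexHull ℝ ({(p, 0), (q, 0), (r, 2), (s, 2)} : Set (ℝ × ℝ))
  have mem : ∀ {x}, x ∈ ({(p, 0), (q, 0), (r, 2), (s, 2)} : Set (ℝ × ℝ)) →
      x ∈ convexHull ℝ {(p, 0), (q, 0), (r, 2), (s, 2)} := fun hx => subset_convexHull ℝ _ hx
  -- `z` lies on the horizontal segment between the two slanted sides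
  have hL : (p + (r - p) / 2 * z.2, z.2) ∈ convexHull ℝ {(p, 0), (q, 0), (r, 2), (s, 2)} := by
    convert hC (mem (x := (p, 0)) (by simp)) (mem (x := (r, 2)) (by simp)) (a := 1 - z.2 / 2)
      (b := z.2 / 2) (by linarith) (by linarith) (by ring) using 1
    ext <;> simp; ring
  have hR : (q + (s - q) / 2 * z.2, z.2) ∈ convexHull ℝ {(p, 0), (q, 0), (r, 2), (s, 2)} := by
    convert hC (mem (x := (q, 0)) (by simp)) (mem (x := (s, 2)) (by simp)) (a := 1 - z.2 / 2)
      (b := z.2 / 2) (by linarith) (by linarith) (by ring) using 1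
    ext <;> simp; ring
  refine hC.segment_subset hL hR ?_
  rw [← Prod.image_mk_segment_left, segment_eq_Icc (h₃.trans h₄)]
  exact ⟨z.1, ⟨h₃, h₄⟩, rfl⟩

section HypTrapezoid

def standardRow (g : ℤ) : Set (ℤ × ℤ) := {p | 1 ≤ p.1 ∧ p.1 ≤ g ∧ p.2 = 1}

def hypTrapezoid (g P Q : ℤ) : Finset (ℤ × ℤ) := {(P, 0), (Q, 0), (-P, 2), (2 * g + 2 - Q, 2)}

variable {g P Q : ℤ}

lemma polyHull_hypTrapezoid (hPQ : P ≤ Q) (hQP : Q - P ≤ 2 * g + 2) :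
    polyHull (hypTrapezoid g P Q) = trapezoid P Q (-P) (2 * g + 2 - Q) := by
  have hPQ' : (P : ℝ) ≤ Q := by exact_mod_cast hPQ
  have hQP' : (Q : ℝ) - P ≤ 2 * g + 2 := by exact_mod_cast hQP
  rw [polyHull, ← convexHull_eq_trapezoid hPQ' (by linarith)]
  simp [hypTrapezoid, toR, Set.image_insert_eq]

lemma intPts_hypTrapezoid (hPQ : P ≤ Q) (hQP : Q - P ≤ 2 * g + 2) :
    intPts (hypTrapezoid g P Q) = standardRow g := by
  ext m
  simp only [intPts, polyHull_hypTrapezoid hPQ hQP, interior_trapezoid, toR, standardRow,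
    Set.mem_ofPred_eq]
  constructor
  · rintro ⟨h₁, h₂, h₃, h₄⟩
    have hm₂ : m.2 = 1 := by
      have : (0 : ℤ) < m.2 := by exact_mod_cast h₁
      have : m.2 < (2 : ℤ) := by exact_mod_cast h₂
      omega
    rw [hm₂, Int.cast_one] at h₃ h₄
    have h₅ : (0 : ℤ) < m.1 := by exact_mod_cast (by linarith : (0 : ℝ) < m.1)
    have h₆ : m.1 < g + 1 := by exact_mod_cast (by linarith : (m.1 : ℝ) < g + 1)
    exact ⟨by omega, by omega, hm₂⟩
  · rintro ⟨h₁, h₂, h₃⟩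
    have h₁' : (1 : ℝ) ≤ m.1 := by exact_mod_cast h₁
    have h₂' : (m.1 : ℝ) ≤ g := by exact_mod_cast h₂
    rw [h₃, Int.cast_one]
    refine ⟨by norm_num, by norm_num, by linarith, by linarith⟩

lemma EkVerts_eq_hypTrapezoid (g k : ℤ) : EkVerts g k = hypTrapezoid g 0 (g + k) := by
  ext ⟨x, y⟩
  simp only [EkVerts, hypTrapezoid, Finset.mem_insert, Finset.mem_singleton, Prod.mk.injEq]
  omega

lemma hypTrapezoid_latEquiv_Ek (g P Q : ℤ) :
    LatEquiv (hypTrapezoid g P Q) (EkVerts g (Q - P - g)) := by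
  let shear : UnimodularMap := ⟨1, P, 0, 1, -P, 0, by simp⟩
  convert latEquiv_image shear (hypTrapezoid g P Q)
  rw [EkVerts_eq_hypTrapezoid]
  ext ⟨x, y⟩
  simp only [hypTrapezoid, Finset.image_insert, Finset.image_singleton, shear,
    unimodMap, Finset.mem_insert, Finset.mem_singleton, Prod.mk.injEq]
  omega

lemma hypTrapezoid_latEquiv_flip (g P Q : ℤ) :
    LatEquiv (hypTrapezoid g P Q) (hypTrapezoid g (Q - g - 1) (g + 1 + P)) := by
  let flip : UnimodularMap := ⟨-1, 0, 0, -1, g + 1, 2, by simp⟩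
  convert latEquiv_image flip (hypTrapezoid g P Q)
  ext ⟨x, y⟩
  simp only [hypTrapezoid, Finset.image_insert, Finset.image_singleton, flip,
    unimodMap, Finset.mem_insert, Finset.mem_singleton, Prod.mk.injEq]
  omega

/-- Either the bottom or the top side has length at least `g + 1`; flipping puts it at the
bottom, and shearing the left side upright gives `E_k`. -/
lemma exists_latEquiv_Ek_of_hypTrapezoid (hPQ : P ≤ Q) (hQP : Q - P ≤ 2 * g + 2) :
    ∃ k, 1 ≤ k ∧ k ≤ g + 2 ∧ LatEquiv (hypTrapezoid g P Q) (EkVerts g k) := by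
  rcases le_or_gt (g + 1) (Q - P) with hlong | hshort
  · exact ⟨Q - P - g, by omega, by omega, hypTrapezoid_latEquiv_Ek g P Q⟩
  · refine ⟨(g + 1 + P) - (Q - g - 1) - g, by omega, by omega, ?_⟩
    exact (hypTrapezoid_latEquiv_flip g P Q).trans (hypTrapezoid_latEquiv_Ek g _ _)

end HypTrapezoid

lemma latPts_finite (V : Finset (ℤ × ℤ)) : (latPts V).Finite := by
  obtain ⟨C, hC⟩ := isBounded_iff_forall_norm_le.1
    ((V.finite_toSet.image toR).isCompact_convexHull ℝ).isBounded
  have hbound : ∀ x : ℤ, |(x : ℝ)| ≤ C → x ∈ Set.Icc (-⌈C⌉) ⌈C⌉ := fun x hx => by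
    rw [abs_le] at hx
    constructor <;> rw [← Int.cast_le (R := ℝ)] <;> push_cast <;> linarith [Int.le_ceil C]
  refine ((Set.finite_Icc (-⌈C⌉) ⌈C⌉).prod (Set.finite_Icc (-⌈C⌉) ⌈C⌉)).subset fun p hp => ?_
  have h := hC _ hp
  rw [Prod.norm_def, max_le_iff, Real.norm_eq_abs, Real.norm_eq_abs] at h
  exact ⟨hbound _ h.1, hbound _ h.2⟩

/-- The cone from a point at height `1 + εγ` over the segment `[1, 2] × {1}` meets the line at
height `1 + ε` in an interval of length `1 - 1/γ` whose endpoints are `k/γ` and `(k + γ - 1)/γ`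
for an integer `k`, so it contains an integer. -/
lemma exists_int_mem_interior_of_far {Q : Set (ℝ × ℝ)} (hQ : Convex ℝ Q)
    (h₁ : ((1 : ℝ), (1 : ℝ)) ∈ interior Q) (h₂ : ((2 : ℝ), (1 : ℝ)) ∈ interior Q)
    {α γ : ℤ} (hγ : 2 ≤ γ) {ε : ℝ} (hw : ((α : ℝ), 1 + ε * γ) ∈ Q) :
    ∃ m : ℤ, ((m : ℝ), 1 + ε) ∈ interior Q := by
  set m := (α + 2 * γ - 2) / γ
  have hm₁ : m * γ ≤ α + 2 * γ - 2 := Int.ediv_mul_le _ (by omega)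
  have hm₂ : α + 2 * γ - 2 < (m + 1) * γ := Int.lt_ediv_add_one_mul_self _ (by omega)
  have hm₁' : (m : ℝ) * γ ≤ α + 2 * γ - 2 := by exact_mod_cast hm₁
  have hm₂' : (α : ℝ) + γ - 1 ≤ m * γ := by exact_mod_cast (by linarith : α + γ - 1 ≤ m * γ)
  have hγ' : (2 : ℝ) ≤ γ := by exact_mod_cast hγ
  have hγ₀ : (γ : ℝ) ≠ 0 := by positivity
  have hγ₁ : (γ : ℝ) - 1 ≠ 0 := by linarith
  -- `(m, 1 + ε)` lies on the segment from `(x, 1)` to the far point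
  set x : ℝ := (m * γ - α) / (γ - 1)
  have hx : (x, (1 : ℝ)) ∈ interior Q := by
    refine hQ.interior.segment_subset h₁ h₂ ?_
    rw [← Prod.image_mk_segment_left, segment_eq_Icc (by norm_num)]
    refine ⟨x, ⟨?_, ?_⟩, rfl⟩
    · rw [le_div_iff₀ (by linarith)]
      linarith
    · rw [div_le_iff₀ (by linarith)]
      linarith
  refine ⟨m, ?_⟩
  convert hQ.combo_interior_self_mem_interior hx hw (a := 1 - 1 / γ) (b := 1 / γ)
    (by rw [sub_pos, div_lt_one (by linarith)]; linarith) (by positivity) (by ring) using 1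
  ext
  · simp only [Prod.smul_fst, Prod.fst_add, smul_eq_mul, x]
    field_simp
    ring
  · simp only [Prod.smul_snd, Prod.snd_add, smul_eq_mul]
    field_simp
    ring

lemma Convex.mk_mem_interior_of_mem_openSegment {Q : Set (ℝ × ℝ)} (hQ : Convex ℝ Q)
    {a b c y : ℝ} (ha : (a, y) ∈ interior Q) (hb : (b, y) ∈ Q) (hc : c ∈ openSegment ℝ a b) :
    (c, y) ∈ interior Q :=
  hQ.openSegment_interior_self_subset_interior ha hb
    (Prod.image_mk_openSegment_left (𝕜 := ℝ) a b y ▸ ⟨c, hc, rfl⟩)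

section StandardRowInterior

variable {W : Finset (ℤ × ℤ)} {g : ℤ} (hW : intPts W = standardRow g)
include hW

lemma mk_mem_interior_iff (m n : ℤ) :
    ((m : ℝ), (n : ℝ)) ∈ interior (polyHull W) ↔ 1 ≤ m ∧ m ≤ g ∧ n = 1 := by
  change (m, n) ∈ intPts W ↔ _
  rw [hW]
  rfl

lemma mk_one_mem_interior {m : ℤ} (h₁ : 1 ≤ m) (h₂ : m ≤ g) :
    ((m : ℝ), (1 : ℝ)) ∈ interior (polyHull W) := by
  simpa using (mk_mem_interior_iff hW m 1).2 ⟨h₁, h₂, rfl⟩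

lemma snd_mem_Icc_of_toR_mem (hg : 2 ≤ g) {p : ℤ × ℤ} (hp : toR p ∈ polyHull W) :
    0 ≤ p.2 ∧ p.2 ≤ 2 := by
  have hQ : Convex ℝ (polyHull W) := convex_convexHull ℝ _
  have h₁ := mk_one_mem_interior hW le_rfl (by omega : (1 : ℤ) ≤ g)
  have h₂ := mk_one_mem_interior hW (by norm_num) hg
  push_cast at h₁ h₂
  by_contra hout
  rcases not_and_or.1 hout with hlow | hhigh
  · obtain ⟨m, hm⟩ := exists_int_mem_interior_of_far hQ h₁ h₂ (α := p.1) (γ := 1 - p.2)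
      (by omega) (ε := -1) (by simp only [toR] at hp; convert hp using 2; push_cast; ring)
    have := ((mk_mem_interior_iff hW m 0).1 (by simpa using hm)).2.2
    omega
  · obtain ⟨m, hm⟩ := exists_int_mem_interior_of_far hQ h₁ h₂ (α := p.1) (γ := p.2 - 1)
      (by omega) (ε := 1) (by simp only [toR] at hp; convert hp using 2; push_cast; ring)
    have := ((mk_mem_interior_iff hW m 2).1 (by convert hm using 2; norm_num)).2.2
    omega

lemma mem_Icc_of_mk_one_mem (hg : 1 ≤ g) {x : ℝ} (hx : (x, 1) ∈ polyHull W) :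
    0 ≤ x ∧ x ≤ g + 1 := by
  have hQ : Convex ℝ (polyHull W) := convex_convexHull ℝ _
  have h₁ : ((1 : ℝ), (1 : ℝ)) ∈ interior (polyHull W) := by
    simpa using mk_one_mem_interior hW le_rfl hg
  by_contra hout
  rcases not_and_or.1 hout with hlow | hhigh
  · have := hQ.mk_mem_interior_of_mem_openSegment (c := 0) h₁ hx
      (by rw [openSegment_symm, openSegment_eq_Ioo (by linarith)]; exact ⟨by linarith, one_pos⟩)
    have := (mk_mem_interior_iff hW 0 1).1 (by simpa using this)
    omega
  · have := hQ.mk_mem_interior_of_mem_openSegment (c := g + 1) (mk_one_mem_interior hW hg le_rfl)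
      hx (by rw [openSegment_eq_Ioo (by linarith)]; exact ⟨by linarith, by linarith⟩)
    have := (mk_mem_interior_iff hW (g + 1) 1).1 (by simpa using this)
    omega

lemma add_mem_Icc_of_mk_mem (hg : 1 ≤ g) {x x' : ℝ} (h₀ : (x, 0) ∈ polyHull W)
    (h₂ : (x', 2) ∈ polyHull W) : 0 ≤ x + x' ∧ x + x' ≤ 2 * g + 2 := by
  have hmid := convex_convexHull ℝ _ h₀ h₂ (by norm_num : (0 : ℝ) ≤ 1 / 2)
    (by norm_num : (0 : ℝ) ≤ 1 / 2) (by norm_num)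
  rw [show (1 / 2 : ℝ) • (x, (0 : ℝ)) + (1 / 2 : ℝ) • (x', 2) = ((x + x') / 2, 1) by
    ext <;> simp; ring] at hmid
  have := mem_Icc_of_mk_one_mem hW hg hmid
  constructor <;> linarith [this.1, this.2]

lemma exists_toR_mem_polyHull (hg : 2 ≤ g) {c : ℤ} (hc : c = 0 ∨ c = 2) :
    ∃ x : ℤ, toR (x, c) ∈ polyHull W := by
  by_contra hnone
  push Not at hnone
  -- otherwise `W` lies on the far side of the line `y = 1` from `y = c`
  have hsub : polyHull W ⊆ halfPlane 0 (c - 1) (c - 1) := polyHull_subset (convex_halfPlane _ _ _)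
    fun v hv => by
      have hv₂ := snd_mem_Icc_of_toR_mem hW hg (toR_mem_polyHull hv)
      have hne : v.2 ≠ c := fun h => hnone v.1 (h ▸ toR_mem_polyHull hv)
      have : ((c - 1 : ℤ) : ℝ) * ((v.2 - 1 : ℤ) : ℝ) ≤ 0 := by
        exact_mod_cast (by rcases hc with rfl | rfl <;> omega : (c - 1) * (v.2 - 1) ≤ 0)
      show 0 * (v.1 : ℝ) + (c - 1) * (v.2 : ℝ) ≤ c - 1
      push_cast at this
      linarith
  have h := interior_mono hsub (mk_one_mem_interior hW le_rfl (by omega : (1 : ℤ) ≤ g))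
  rw [interior_halfPlane (by rcases hc with rfl | rfl <;> norm_num)] at h
  simp at h

lemma polyHull_subset_trapezoid (hg : 2 ≤ g) {P Q : ℤ}
    (hbot : ∀ x : ℤ, toR (x, 0) ∈ polyHull W → P ≤ x ∧ x ≤ Q)
    (hP : toR (P, 0) ∈ polyHull W) (hQ : toR (Q, 0) ∈ polyHull W) :
    polyHull W ⊆ trapezoid P Q (-P) (2 * g + 2 - Q) := by
  refine polyHull_subset (convex_trapezoid _ _ _ _) fun ⟨x, y⟩ hv => ?_
  have hxy := toR_mem_polyHull hv
  have hy := snd_mem_Icc_of_toR_mem hW hg hxy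
  have hg' : (1 : ℤ) ≤ g := by omega
  simp only [trapezoid, toR, Set.mem_ofPred_eq]
  obtain rfl | rfl | rfl : y = 0 ∨ y = 1 ∨ y = 2 := by omega
  · norm_num
    exact hbot x hxy
  · have := mem_Icc_of_mk_one_mem hW hg' (by simpa [toR] using hxy)
    norm_num
    constructor <;> linarith [this.1, this.2]
  · have hlo := add_mem_Icc_of_mk_mem hW hg' (by simpa [toR] using hP) (by simpa [toR] using hxy)
    have hhi := add_mem_Icc_of_mk_mem hW hg' (by simpa [toR] using hQ) (by simpa [toR] using hxy)
    norm_num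
    constructor <;> linarith [hlo.1, hhi.2]

end StandardRowInterior

section Maximal

variable {W : Finset (ℤ × ℤ)} {g : ℤ}

lemma isLatticePolygon_of_intPts_eq (hW : intPts W = standardRow g) (hg : 1 ≤ g) :
    IsLatticePolygon W :=
  (isLatticePolygon_iff_nonempty_interior W).2 ⟨_, mk_one_mem_interior hW le_rfl hg⟩

lemma intPts_EkVerts {k : ℤ} (hk₁ : 1 ≤ k) (hk₂ : k ≤ g + 2) :
    intPts (EkVerts g k) = standardRow g := by
  rw [EkVerts_eq_hypTrapezoid]
  exact intPts_hypTrapezoid (by omega) (by omega)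

lemma maximalPoly_EkVerts (hg : 2 ≤ g) {k : ℤ} (hk₁ : 1 ≤ k) (hk₂ : k ≤ g + 2) :
    MaximalPoly (EkVerts g k) := by
  have hint := intPts_EkVerts hk₁ hk₂
  refine ⟨isLatticePolygon_of_intPts_eq hint (by omega), ?_⟩
  rintro ⟨W, -, hlt, hW⟩
  rw [hint] at hW
  have hmem : ∀ v ∈ EkVerts g k, toR v ∈ polyHull W := fun v hv =>
    hlt.subset (toR_mem_polyHull hv)
  have hsub := polyHull_subset_trapezoid hW hg (P := 0) (Q := g + k) (fun x hx => ?_)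
    (hmem _ (by simp [EkVerts])) (hmem _ (by simp [EkVerts]))
  · rw [← polyHull_hypTrapezoid (by omega) (by omega), ← EkVerts_eq_hypTrapezoid] at hsub
    exact hlt.not_subset hsub
  -- bottom lattice points are bounded through the midpoints with the top vertices of `E_k`
  have hx' : ((x : ℝ), (0 : ℝ)) ∈ polyHull W := by simpa [toR] using hx
  have hlo := add_mem_Icc_of_mk_mem hW (by omega) hx' (x' := 0)
    (by simpa [toR] using hmem (0, 2) (by simp [EkVerts]))
  have hhi := add_mem_Icc_of_mk_mem hW (by omega) hx' (x' := g + 2 - k)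
    (by simpa [toR] using hmem (g + 2 - k, 2) (by simp [EkVerts]))
  have h₁ : (0 : ℝ) ≤ x := by linarith [hlo.1]
  have h₂ : (x : ℝ) ≤ g + k := by linarith [hhi.2]
  exact ⟨by exact_mod_cast h₁, by exact_mod_cast h₂⟩

/-- The extreme lattice points `(P, 0)`, `(Q, 0)` of the bottom row determine a trapezoid
containing `W` with the same interior lattice points; by maximality it is `W` itself. -/
lemma exists_latEquiv_Ek_of_maximalPoly (hW : intPts W = standardRow g) (hg : 2 ≤ g)
    (hmax : MaximalPoly W) : ∃ k, 1 ≤ k ∧ k ≤ g + 2 ∧ LatEquiv W (EkVerts g k) := by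
  set B : Set ℤ := {x | toR (x, 0) ∈ polyHull W}
  have hB : B.Finite :=
    (latPts_finite W).preimage (f := fun x : ℤ => (x, (0 : ℤ))) fun _ _ _ _ h => (Prod.mk.inj h).1
  obtain ⟨x₀, hx₀⟩ := exists_toR_mem_polyHull hW hg (Or.inl rfl)
  obtain ⟨x₂, hx₂⟩ := exists_toR_mem_polyHull hW hg (Or.inr rfl)
  set P := sInf B
  set Q := sSup B
  have hP : toR (P, 0) ∈ polyHull W := Int.csInf_mem ⟨x₀, hx₀⟩ hB.bddBelow
  have hQ : toR (Q, 0) ∈ polyHull W := Int.csSup_mem ⟨x₀, hx₀⟩ hB.bddAbove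
  have hbot : ∀ x ∈ B, P ≤ x ∧ x ≤ Q := fun x hx =>
    ⟨csInf_le hB.bddBelow hx, le_csSup hB.bddAbove hx⟩
  have hPQ : P ≤ Q := (hbot _ hP).2
  have hQP : Q - P ≤ 2 * g + 2 := by
    have hlo := add_mem_Icc_of_mk_mem hW (by omega) (x := P) (by simpa [toR] using hP)
      (by simpa [toR] using hx₂)
    have hhi := add_mem_Icc_of_mk_mem hW (by omega) (x := Q) (by simpa [toR] using hQ)
      (by simpa [toR] using hx₂)
    have : ((Q - P : ℤ) : ℝ) ≤ ((2 * g + 2 : ℤ) : ℝ) := by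
      push_cast
      linarith [hlo.1, hhi.2]
    exact_mod_cast this
  have hsub := polyHull_subset_trapezoid hW hg hbot hP hQ
  rw [← polyHull_hypTrapezoid hPQ hQP] at hsub
  have hint := intPts_hypTrapezoid (g := g) hPQ hQP
  have heq : polyHull W = polyHull (hypTrapezoid g P Q) := by
    by_contra hne
    exact hmax.2 ⟨_, isLatticePolygon_of_intPts_eq hint (by omega), hsub.ssubset_of_ne hne,
      hint.trans hW.symm⟩
  obtain ⟨k, hk₁, hk₂, hk⟩ := exists_latEquiv_Ek_of_hypTrapezoid hPQ hQP
  exact ⟨k, hk₁, hk₂, (latEquiv_of_polyHull_eq heq).trans hk⟩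

end Maximal

lemma Collinear.cross_eq_zero {k : Type*} [Field k] {s : Set (k × k)} (h : Collinear k s)
    {p q r : k × k} (hp : p ∈ s) (hq : q ∈ s) (hr : r ∈ s) :
    (q.1 - p.1) * (r.2 - p.2) = (q.2 - p.2) * (r.1 - p.1) := by
  obtain ⟨v, hv⟩ := (collinear_iff_of_mem hp).1 h
  obtain ⟨t, rfl⟩ := hv q hq
  obtain ⟨u, rfl⟩ := hv r hr
  simp only [vadd_eq_add, Prod.fst_add, Prod.snd_add, Prod.smul_fst, Prod.smul_snd, smul_eq_mul]
  ring

lemma Collinear.image_affineMap {k V P V₂ P₂ : Type*} [DivisionRing k] [AddCommGroup V]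
    [Module k V] [AddTorsor V P] [AddCommGroup V₂] [Module k V₂] [AddTorsor V₂ P₂] {s : Set P}
    (h : Collinear k s) (F : P →ᵃ[k] P₂) : Collinear k (F '' s) := by
  rw [collinear_iff_exists_forall_eq_smul_vadd] at h ⊢
  obtain ⟨p₀, v, hv⟩ := h
  refine ⟨F p₀, F.linear v, ?_⟩
  rintro _ ⟨p, hp, rfl⟩
  obtain ⟨r, rfl⟩ := hv p hp
  exact ⟨r, by rw [F.map_vadd, F.linear.map_smul]⟩

lemma collinear_toR_image_of_snd_eq {T : Set (ℤ × ℤ)} {c : ℤ} (h : ∀ z ∈ T, z.2 = c) :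
    Collinear ℝ (toR '' T) := by
  rw [collinear_iff_exists_forall_eq_smul_vadd]
  refine ⟨(0, c), (1, 0), ?_⟩
  rintro _ ⟨z, hz, rfl⟩
  refine ⟨z.1, ?_⟩
  ext <;> simp [toR, h z hz]

lemma Collinear.injOn_fst_or_injOn_snd {T : Set (ℤ × ℤ)} (h : Collinear ℝ (toR '' T)) :
    Set.InjOn Prod.fst T ∨ Set.InjOn Prod.snd T := by
  by_cases hsnd : Set.InjOn Prod.snd T
  · exact Or.inr hsnd
  simp only [Set.InjOn, not_forall] at hsnd
  obtain ⟨u, hu, w, hw, huw, hne⟩ := hsnd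
  have hrow : ∀ z ∈ T, z.2 = u.2 := fun z hz => by
    have hcross := h.cross_eq_zero (Set.mem_image_of_mem toR hu) (Set.mem_image_of_mem toR hw)
      (Set.mem_image_of_mem toR hz)
    simp only [toR] at hcross
    have hcross' : (w.1 - u.1) * (z.2 - u.2) = (w.2 - u.2) * (z.1 - u.1) := by
      exact_mod_cast hcross
    rw [← huw, sub_self, zero_mul, mul_eq_zero] at hcross'
    have : w.1 ≠ u.1 := fun h1 => hne (Prod.ext h1.symm huw)
    omega
  exact Or.inl fun z hz z' hz' hzz' => Prod.ext hzz' ((hrow z hz).trans (hrow z' hz').symm)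

/-- A primitive direction vector `v` of the line through `p` and `q`, completed by Bézout to a
unimodular matrix with second row `(-v₂, v₁)`, maps that line to `y = 1`. -/
lemma exists_unimodularMap_snd_eq_one {S : Set (ℤ × ℤ)} (hS : Collinear ℝ (toR '' S))
    {p q : ℤ × ℤ} (hp : p ∈ S) (hq : q ∈ S) (hpq : p ≠ q) :
    ∃ σ : UnimodularMap, ∀ s ∈ S, (σ s).2 = 1 := by
  have hgcd : 0 < Int.gcd (q.1 - p.1) (q.2 - p.2) :=
    Int.gcd_pos_iff.2 (by by_contra! h; exact hpq (Prod.ext (by omega) (by omega)))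
  obtain ⟨n, v₁, v₂, hn, hv, hd₁, hd₂⟩ := Int.exists_gcd_one' hgcd
  have hbez : v₁ * v₁.gcdA v₂ + v₂ * v₁.gcdB v₂ = 1 := by
    have := Int.gcd_eq_gcd_ab v₁ v₂
    rw [hv] at this
    exact_mod_cast this.symm
  refine ⟨⟨v₁.gcdA v₂, v₁.gcdB v₂, -v₂, v₁, 0, 1 + v₂ * p.1 - v₁ * p.2,
    Int.isUnit_iff.2 (Or.inl (by linear_combination hbez))⟩, fun s hs => ?_⟩
  have hcross := hS.cross_eq_zero (Set.mem_image_of_mem toR hp) (Set.mem_image_of_mem toR hq)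
    (Set.mem_image_of_mem toR hs)
  simp only [toR] at hcross
  have hcross' : (q.1 - p.1) * (s.2 - p.2) = (q.2 - p.2) * (s.1 - p.1) := by
    exact_mod_cast hcross
  rw [hd₁, hd₂] at hcross'
  have hline : v₁ * (s.2 - p.2) = v₂ * (s.1 - p.1) :=
    mul_left_cancel₀ (by exact_mod_cast hn.ne' : (n : ℤ) ≠ 0) (by linear_combination hcross')
  show -v₂ * s.1 + v₁ * s.2 + (1 + v₂ * p.1 - v₁ * p.2) = 1
  linear_combination hline

lemma ncard_Icc_int (a b : ℤ) : (Set.Icc a b).ncard = (b + 1 - a).toNat := by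
  rw [← Finset.coe_Icc, Set.ncard_coe_finset, Int.card_Icc]

lemma Int.eq_Icc_of_ordConnected {N : Set ℤ} (hN : N.Finite) (hne : N.Nonempty)
    (hc : N.OrdConnected) : N = Set.Icc (sInf N) (sSup N) :=
  subset_antisymm (fun _ hn => ⟨csInf_le hN.bddBelow hn, le_csSup hN.bddAbove hn⟩)
    (hc.out (Int.csInf_mem hne hN.bddBelow) (Int.csSup_mem hne hN.bddAbove))

lemma ordConnected_setOf_mk_mem_intPts (W : Finset (ℤ × ℤ)) (y : ℤ) :
    Set.OrdConnected {n : ℤ | (n, y) ∈ intPts W} := by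
  refine ⟨fun a ha b hb n ⟨han, hnb⟩ => ?_⟩
  show toR (n, y) ∈ interior (polyHull W)
  refine (convex_convexHull ℝ _).interior.segment_subset ha hb ?_
  simp only [toR]
  rw [← Prod.image_mk_segment_left, segment_eq_Icc (by exact_mod_cast han.trans hnb)]
  exact ⟨n, ⟨by exact_mod_cast han, by exact_mod_cast hnb⟩, rfl⟩

lemma exists_unimodularMap_image_intPts_eq_standardRow {W : Finset (ℤ × ℤ)} {g : ℤ}
    (hrow : ∀ p ∈ intPts W, p.2 = 1) (hcard : ((intPts W).ncard : ℤ) = g) (hg : 1 ≤ g) :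
    ∃ σ : UnimodularMap, σ '' intPts W = standardRow g := by
  set N : Set ℤ := {n | (n, 1) ∈ intPts W}
  have hNW : (fun n => (n, (1 : ℤ))) '' N = intPts W := by
    ext ⟨x, y⟩
    constructor
    · rintro ⟨n, hn, h⟩
      rwa [← h]
    · intro h
      obtain rfl : y = 1 := hrow _ h
      exact ⟨x, h, rfl⟩
  have hinj : Function.Injective fun n : ℤ => (n, (1 : ℤ)) := fun _ _ h => (Prod.mk.inj h).1
  have hNcard : (N.ncard : ℤ) = g := by rwa [← Set.ncard_image_of_injective N hinj, hNW]
  have hIcc : N = Set.Icc (sInf N) (sSup N) := Int.eq_Icc_of_ordConnected (Set.finite_of_ncard_pos (by omega))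
    (Set.nonempty_of_ncard_ne_zero (by omega)) (ordConnected_setOf_mk_mem_intPts W 1)
  set a := sInf N
  set b := sSup N
  have hb : b = a + g - 1 := by
    rw [hIcc, ncard_Icc_int] at hNcard
    omega
  refine ⟨⟨1, 0, 0, 1, 1 - a, 0, by simp⟩, ?_⟩
  rw [← hNW, hIcc, Set.image_image]
  ext ⟨x, y⟩
  simp only [standardRow, Set.mem_image, Set.mem_Icc, Set.mem_ofPred_eq, unimodMap,
    Prod.mk.injEq]
  constructor
  · rintro ⟨n, ⟨h₁, h₂⟩, rfl, rfl⟩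
    omega
  · rintro ⟨h₁, h₂, rfl⟩
    exact ⟨x + a - 1, ⟨by omega, by omega⟩, by ring, by ring⟩

section Classification

open UnimodularMap

variable {V : Finset (ℤ × ℤ)} {g : ℤ}

lemma exists_latEquiv_Ek_of_collinear (hg : 2 ≤ g) (hcard : ((intPts V).ncard : ℤ) = g)
    (hcol : Collinear ℝ (toR '' intPts V)) (hmax : MaximalPoly V) :
    ∃ k, 1 ≤ k ∧ k ≤ g + 2 ∧ LatEquiv V (EkVerts g k) := by
  obtain ⟨p, q, hp, hq, hpq⟩ :=
    (Set.one_lt_ncard_iff (Set.finite_of_ncard_pos (by omega))).1 (by omega : 1 < (intPts V).ncard)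
  obtain ⟨σ, hσ⟩ := exists_unimodularMap_snd_eq_one hcol hp hq hpq
  have h₁ : σ.real '' polyHull V = polyHull (V.image σ) := (σ.polyHull_image V).symm
  have hrow : ∀ p ∈ intPts (V.image σ), p.2 = 1 := by
    rw [intPts_eq_image h₁]
    rintro _ ⟨s, hs, rfl⟩
    exact hσ s hs
  have hcard₁ : ((intPts (V.image σ)).ncard : ℤ) = g := by
    rwa [intPts_eq_image h₁, Set.ncard_image_of_injective _ σ.injective]
  obtain ⟨τ, hτ⟩ := exists_unimodularMap_image_intPts_eq_standardRow hrow hcard₁ (by omega)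
  have h₂ : τ.real '' polyHull (V.image σ) = polyHull ((V.image σ).image τ) :=
    (τ.polyHull_image _).symm
  obtain ⟨k, hk₁, hk₂, hk⟩ := exists_latEquiv_Ek_of_maximalPoly
    ((intPts_eq_image h₂).trans hτ) hg (maximalPoly h₂ (maximalPoly h₁ hmax))
  exact ⟨k, hk₁, hk₂, ((latEquiv_image σ V).trans (latEquiv_image τ _)).trans hk⟩

lemma ncard_standardRow (g : ℤ) : (standardRow g).ncard = g.toNat := by
  have : standardRow g = (fun n => (n, (1 : ℤ))) '' Set.Icc 1 g := by
    ext ⟨x, y⟩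
    simp only [standardRow, Set.mem_ofPred_eq, Set.mem_image, Set.mem_Icc, Prod.mk.injEq]
    constructor
    · rintro ⟨h₁, h₂, rfl⟩
      exact ⟨x, ⟨h₁, h₂⟩, rfl, rfl⟩
    · rintro ⟨n, ⟨h₁, h₂⟩, rfl, rfl⟩
      exact ⟨h₁, h₂, rfl⟩
  rw [this, Set.ncard_image_of_injective _ fun _ _ h => (Prod.mk.inj h).1, ncard_Icc_int]
  omega

lemma maximal_hyperelliptic_of_latEquiv_Ek (hg : 2 ≤ g) {k : ℤ} (hk₁ : 1 ≤ k) (hk₂ : k ≤ g + 2)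
    (h : LatEquiv V (EkVerts g k)) :
    IsLatticePolygon V ∧ ((intPts V).ncard : ℤ) = g ∧ Hyperelliptic V ∧ MaximalPoly V := by
  obtain ⟨σ, hσ⟩ := latEquiv_iff.1 h.symm
  have hint : intPts V = σ '' standardRow g := by rw [intPts_eq_image hσ, intPts_EkVerts hk₁ hk₂]
  have hcard : (intPts V).ncard = g.toNat := by
    rw [hint, Set.ncard_image_of_injective _ σ.injective, ncard_standardRow]
  have hmax := maximalPoly hσ (maximalPoly_EkVerts hg hk₁ hk₂)
  refine ⟨hmax.1, by omega, ⟨by omega, ?_⟩, hmax⟩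
  rw [hint, image_toR_image]
  exact (collinear_toR_image_of_snd_eq fun z hz => hz.2.2).image_affineMap σ.real

lemma ncard_le_of_collinear_subset_latPts_Ek (hg : 1 ≤ g) {k : ℤ} (hk₁ : 1 ≤ k)
    (hk₂ : k ≤ g + 2) {T : Set (ℤ × ℤ)} (hT : T ⊆ latPts (EkVerts g k))
    (hcol : Collinear ℝ (toR '' T)) : (T.ncard : ℤ) ≤ g + k + 1 := by
  have hbox : ∀ z ∈ T, z.1 ∈ Set.Icc 0 (g + k) ∧ z.2 ∈ Set.Icc 0 2 := fun z hz => by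
    have hz' : toR z ∈ polyHull (EkVerts g k) := hT hz
    rw [EkVerts_eq_hypTrapezoid, polyHull_hypTrapezoid (by omega) (by omega)] at hz'
    obtain ⟨h₁, h₂, h₃, h₄⟩ := hz'
    simp only [toR] at h₁ h₂ h₃ h₄
    push_cast at h₁ h₂ h₃ h₄
    have hk : (1 : ℝ) ≤ k := by exact_mod_cast hk₁
    have h₅ : (0 : ℝ) ≤ z.1 := by linarith
    have h₆ : (z.1 : ℝ) ≤ g + k := by nlinarith
    exact ⟨⟨by exact_mod_cast h₅, by exact_mod_cast h₆⟩, ⟨by exact_mod_cast h₁,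
      by exact_mod_cast h₂⟩⟩
  rcases hcol.injOn_fst_or_injOn_snd with hinj | hinj
  · have := Set.ncard_le_ncard_of_injOn _ (fun z hz => (hbox z hz).1) hinj (Set.finite_Icc _ _)
    rw [ncard_Icc_int] at this
    omega
  · have := Set.ncard_le_ncard_of_injOn _ (fun z hz => (hbox z hz).2) hinj (Set.finite_Icc _ _)
    rw [ncard_Icc_int] at this
    omega

/-- The bottom row of `E_k` is a collinear set of `g + k + 1` lattice points, and `E_{k'}` has no
more than `g + k' + 1` collinear lattice points. -/
lemma le_of_latEquiv_Ek (hg : 1 ≤ g) {k k' : ℤ} (hk₁ : 1 ≤ k) (hk₂ : k ≤ g + 2) (hk₁' : 1 ≤ k')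
    (hk₂' : k' ≤ g + 2) (h : LatEquiv (EkVerts g k) (EkVerts g k')) : k ≤ k' := by
  obtain ⟨a, b, c, d, e, f, hdet, him⟩ := h
  let σ : UnimodularMap := ⟨a, b, c, d, e, f, Int.isUnit_iff.2 hdet⟩
  set B : Set (ℤ × ℤ) := (fun x => (x, (0 : ℤ))) '' Set.Icc 0 (g + k)
  have hB : B ⊆ latPts (EkVerts g k) := by
    rintro _ ⟨x, ⟨h₁, h₂⟩, rfl⟩
    show toR (x, 0) ∈ polyHull (EkVerts g k)
    rw [EkVerts_eq_hypTrapezoid, polyHull_hypTrapezoid (by omega) (by omega)]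
    have h₁' : (0 : ℝ) ≤ x := by exact_mod_cast h₁
    have h₂' : (x : ℝ) ≤ g + k := by exact_mod_cast h₂
    simp only [trapezoid, toR, Set.mem_ofPred_eq]
    push_cast
    refine ⟨le_rfl, by norm_num, by linarith, by linarith⟩
  have hBcard : (B.ncard : ℤ) = g + k + 1 := by
    rw [Set.ncard_image_of_injective _ fun _ _ h => (Prod.mk.inj h).1, ncard_Icc_int]
    omega
  have hσB := ncard_le_of_collinear_subset_latPts_Ek hg hk₁' hk₂' (T := σ '' B)
    (him ▸ Set.image_mono hB) (by
      rw [image_toR_image]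
      exact (collinear_toR_image_of_snd_eq (c := 0) (by rintro _ ⟨x, -, rfl⟩; rfl)).image_affineMap
        σ.real)
  rw [Set.ncard_image_of_injective _ σ.injective] at hσB
  omega

end Classification

/-- Up to lattice equivalence, the maximal hyperelliptic
lattice polygons of genus `g ≥ 2` are exactly the `g + 2` polygons
`E_k = conv((0,0),(0,2),(g+k,0),(g+2-k,2))`, `1 ≤ k ≤ g+2`; these are pairwise
inequivalent, and each `E_k` has exactly the `g` interior lattice points
`(1,1), …, (g,1)`. -/
theorem maximal_hyperelliptic_classification (g : ℤ) (hg : 2 ≤ g) :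
    (∀ V : Finset (ℤ × ℤ),
      (IsLatticePolygon V ∧ ((intPts V).ncard : ℤ) = g ∧ Hyperelliptic V ∧
        MaximalPoly V) ↔
      ∃ k : ℤ, 1 ≤ k ∧ k ≤ g + 2 ∧ LatEquiv V (EkVerts g k)) ∧
    (∀ k k' : ℤ, 1 ≤ k → k ≤ g + 2 → 1 ≤ k' → k' ≤ g + 2 →
      LatEquiv (EkVerts g k) (EkVerts g k') → k = k') ∧
    (∀ k : ℤ, 1 ≤ k → k ≤ g + 2 →
      intPts (EkVerts g k) = {p : ℤ × ℤ | 1 ≤ p.1 ∧ p.1 ≤ g ∧ p.2 = 1}) := by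
  refine ⟨fun V => ⟨fun ⟨_, hcard, hhyp, hmax⟩ => ?_, fun ⟨k, hk₁, hk₂, h⟩ => ?_⟩,
    fun k k' hk₁ hk₂ hk₁' hk₂' h => ?_, fun k hk₁ hk₂ => intPts_EkVerts hk₁ hk₂⟩
  · exact exists_latEquiv_Ek_of_collinear hg hcard hhyp.2 hmax
  · exact maximal_hyperelliptic_of_latEquiv_Ek hg hk₁ hk₂ h
  · exact le_antisymm (le_of_latEquiv_Ek (by omega) hk₁ hk₂ hk₁' hk₂' h)
      (le_of_latEquiv_Ek (by omega) hk₁' hk₂' hk₁ hk₂ h.symm)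
end
end
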